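/- For g in the Clifford group CSpin(V) of a nondegenerate quadratic space (V, ψ) over ℚ, and for all x, y in C^+(V), the bilinear form φ_a(x, y) = tr(ι(x) y a) satisfies φ_a(gx, gy) = N(g) φ_a(x, y), where N is the spinorial norm. In particular, left multiplication by CSpin(V) on C^+(V) lands in the group of symplectic similitudes CSp(C^+(V), φ_a). -/
import Mathlib


open CliffordAlgebra

variable {V : Type*} [AddCommGroup V] [Module ℚ V]

/-- The canonical involution `ι` of the even Clifford algebra `C⁺(V)` (Mathlib's
`CliffordAlgebra.reverse`, which preserves the even part). -/
noncomputable def evenReverse (Q : QuadraticForm ℚ V) (x : even Q) : even Q :=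
  ⟨reverse (x : CliffordAlgebra Q), by
    have hx : (x : CliffordAlgebra Q) ∈ evenOdd Q 0 := by
      rw [← even_toSubmodule]; exact x.2
    have h : reverse (x : CliffordAlgebra Q) ∈ evenOdd Q 0 :=
      (reverse_mem_evenOdd_iff Q).mpr hx
    rw [← even_toSubmodule] at h; exact h⟩

/-- The trace of left multiplication on the even Clifford algebra `C⁺(V)`. -/
noncomputable def evenTrace (Q : QuadraticForm ℚ V) (u : even Q) : ℚ :=
  LinearMap.trace ℚ (even Q) (LinearMap.mulLeft ℚ u)

/-- The pairing `φ_a(x, y) = tr(ι(x) y a)` on `C⁺(V)`. -/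
noncomputable def phiForm (Q : QuadraticForm ℚ V) (a x y : even Q) : ℚ :=
  evenTrace Q (evenReverse Q x * y * a)

/-- Membership in the Clifford group `CSpin(V)`. -/
def InCSpin (Q : QuadraticForm ℚ V) (g : (CliffordAlgebra Q)ˣ) : Prop :=
  (g : CliffordAlgebra Q) ∈ evenOdd Q 0 ∧
    ∀ v : V, ∃ w : V, (g : CliffordAlgebra Q) * ι Q v = ι Q w * (g : CliffordAlgebra Q)

set_option maxHeartbeats 1000000 in
set_option synthInstance.maxHeartbeats 400000 in
/-- For `g` in the Clifford group `CSpin(V)` of a nondegenerate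
quadratic space `(V, ψ)` over `ℚ` and all `x, y ∈ C⁺(V)`, the bilinear form
`φ_a(x, y) = tr(ι(x) y a)` (with `ι(a) = -a`) satisfies
`φ_a(g x, g y) = N(g) φ_a(x, y)`, where `N` is the spinorial norm.  In particular,
the spin representation (left multiplication) of `CSpin(V)` on `C⁺(V)` lands in the
symplectic similitude group `CSp(C⁺(V), φ_a)`. -/
theorem phiForm_similitude
    (Q : QuadraticForm ℚ V) [FiniteDimensional ℚ V]
    (hQ : (QuadraticMap.polarBilin Q).Nondegenerate)
    (a : even Q) (ha : reverse (a : CliffordAlgebra Q) = -(a : CliffordAlgebra Q))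
    (g : (CliffordAlgebra Q)ˣ) (hg : InCSpin Q g)
    (hgE : (g : CliffordAlgebra Q) ∈ even Q)
    (N : ℚ)
    (hN : reverse (g : CliffordAlgebra Q) * (g : CliffordAlgebra Q) =
      algebraMap ℚ (CliffordAlgebra Q) N)
    (x y : even Q) :
    phiForm Q a ((⟨(g : CliffordAlgebra Q), hgE⟩ : even Q) * x)
        ((⟨(g : CliffordAlgebra Q), hgE⟩ : even Q) * y) = N * phiForm Q a x y := by
  set gE : even Q := ⟨(g : CliffordAlgebra Q), hgE⟩ with hgE'
  have key : evenReverse Q (gE * x) * (gE * y) * a = N • (evenReverse Q x * y * a) := by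
    apply Subtype.ext
    show reverse ((g : CliffordAlgebra Q) * (x : CliffordAlgebra Q)) *
        ((g : CliffordAlgebra Q) * (y : CliffordAlgebra Q)) * (a : CliffordAlgebra Q)
        = N • (reverse (x : CliffordAlgebra Q) * (y : CliffordAlgebra Q) * (a : CliffordAlgebra Q))
    rw [reverse.map_mul]
    have h1 : reverse (x : CliffordAlgebra Q) * reverse (g : CliffordAlgebra Q) *
          ((g : CliffordAlgebra Q) * (y : CliffordAlgebra Q)) * (a : CliffordAlgebra Q)
        = reverse (x : CliffordAlgebra Q) *
            (reverse (g : CliffordAlgebra Q) * (g : CliffordAlgebra Q)) *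
            ((y : CliffordAlgebra Q) * (a : CliffordAlgebra Q)) := by
      simp only [mul_assoc]
    rw [h1, hN, Algebra.smul_def, ← Algebra.commutes]
    simp only [mul_assoc]
  rw [show phiForm Q a (gE * x) (gE * y) = evenTrace Q (evenReverse Q (gE * x) * (gE * y) * a) from rfl,
    key]
  have h2 : LinearMap.mulLeft ℚ (N • (evenReverse Q x * y * a)) =
      N • LinearMap.mulLeft ℚ (evenReverse Q x * y * a) := by
    ext z
    simp only [LinearMap.mulLeft_apply, LinearMap.smul_apply, smul_mul_assoc]
  show LinearMap.trace ℚ (even Q) (LinearMap.mulLeft ℚ (N • (evenReverse Q x * y * a))) = _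
  rw [h2, map_smul, smul_eq_mul]
  rfl
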